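/- Let H, ρ, F be as in the twist map setting, and assume additionally that all second partial derivatives of H are bounded in absolute value by some M > 0. Let u : ℝ → ℝ be C¹ with u(x + 1) = u(x), let c ∈ ℝ, and suppose the graph {(x, c + u'(x)) : x ∈ ℝ} is invariant under F. Suppose moreover there are integers p and q ≥ 1 such that F^q(x, c + u'(x)) = (x + p, c + u'(x)) for all x ∈ ℝ. Fix x₀ ∈ ℝ and let x_k := π₁(F^k(x₀, c + u'(x₀))) for 0 ≤ k ≤ q. Then the orbit segment minimizes the action among all paths with the same endpoints: for every finite sequence y₀, y₁, …, y_q ∈ ℝ with y₀ = x₀ and y_q = x₀ + p, one has Σ_{k=0}^{q-1} H(x_k, x_{k+1}) ≤ Σ_{k=0}^{q-1} H(y_k, y_{k+1}). -/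

import Mathlib

open Real

/-- Partial derivative of `H` in the first variable. -/
noncomputable def D1 (H : ℝ → ℝ → ℝ) (x x' : ℝ) : ℝ := deriv (fun t => H t x') x

/-- Partial derivative of `H` in the second variable. -/
noncomputable def D2 (H : ℝ → ℝ → ℝ) (x x' : ℝ) : ℝ := deriv (fun t => H x t) x'

/-- Mixed second partial derivative `∂₁₂H`. -/
noncomputable def D12 (H : ℝ → ℝ → ℝ) (x x' : ℝ) : ℝ := deriv (fun t => D1 H x t) x'

/-- Second partial derivative `∂₁₁H`. -/
noncomputable def D11 (H : ℝ → ℝ → ℝ) (x x' : ℝ) : ℝ := deriv (fun t => D1 H t x') x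

/-- Mixed second partial derivative `∂₂₁H`. -/
noncomputable def D21 (H : ℝ → ℝ → ℝ) (x x' : ℝ) : ℝ := deriv (fun t => D2 H t x') x

/-- Second partial derivative `∂₂₂H`. -/
noncomputable def D22 (H : ℝ → ℝ → ℝ) (x x' : ℝ) : ℝ := deriv (fun t => D2 H x t) x'

/-!
Write the invariant graph as `r = v x` with `v = c + u'`, let `U x = u x + c * x` (a primitive
of `v`), `H̃ a b = H a b + U a - U b`, and `F (a, v a) = (G a, v (G a))`. The defining relations
of `F` say that `G a` is a critical point of `H̃ a`, and invariance of the graph together with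
injectivity of `F` make it the only one. The twist condition drives `∂_b H̃ a b` to `±∞` as
`b → ±∞`, so `G a` is the global minimiser of `H̃ a`. As also `∂_a H̃ a (G a) = 0`, the envelope
argument gives `(a ↦ H̃ a (G a))' = 0`: this minimal value `m` does not depend on `a`. Hence along
the orbit `∑ H̃ (x k) (x (k+1)) = q m ≤ ∑ H̃ (y k) (y (k+1))`, and both tilted sums differ from the
actions by the same boundary term `U x₀ - U (x₀ + p)`.
-/

open Function Filter Topology

section PartialDerivatives

variable {E : Type*} [NormedAddCommGroup E] [NormedSpace ℝ E]

theorem HasFDerivAt.hasDerivAt_left {g : ℝ × ℝ → E} {g' : ℝ × ℝ →L[ℝ] E} {x y : ℝ}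
    (hg : HasFDerivAt g g' (x, y)) : HasDerivAt (fun t => g (t, y)) (g' (1, 0)) x :=
  hg.comp_hasDerivAt x ((hasDerivAt_id x).prodMk (hasDerivAt_const x y))

theorem HasFDerivAt.hasDerivAt_right {g : ℝ × ℝ → E} {g' : ℝ × ℝ →L[ℝ] E} {x y : ℝ}
    (hg : HasFDerivAt g g' (x, y)) : HasDerivAt (fun t => g (x, t)) (g' (0, 1)) y :=
  hg.comp_hasDerivAt y ((hasDerivAt_const y x).prodMk (hasDerivAt_id y))

variable {H : ℝ → ℝ → ℝ}

theorem hasDerivAt_left (hH : Differentiable ℝ (uncurry H)) (x x' : ℝ) :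
    HasDerivAt (H · x') (D1 H x x') x :=
  (hH (x, x')).hasFDerivAt.hasDerivAt_left.differentiableAt.hasDerivAt

theorem hasDerivAt_right (hH : Differentiable ℝ (uncurry H)) (x x' : ℝ) :
    HasDerivAt (H x ·) (D2 H x x') x' :=
  (hH (x, x')).hasFDerivAt.hasDerivAt_right.differentiableAt.hasDerivAt

theorem D1_eq_fderiv (hH : Differentiable ℝ (uncurry H)) (x x' : ℝ) :
    D1 H x x' = fderiv ℝ (uncurry H) (x, x') (1, 0) :=
  (hH (x, x')).hasFDerivAt.hasDerivAt_left.deriv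

theorem D2_eq_fderiv (hH : Differentiable ℝ (uncurry H)) (x x' : ℝ) :
    D2 H x x' = fderiv ℝ (uncurry H) (x, x') (0, 1) :=
  (hH (x, x')).hasFDerivAt.hasDerivAt_right.deriv

theorem hasFDerivAt_fderiv (hH : ContDiff ℝ 2 (uncurry H)) (z : ℝ × ℝ) :
    HasFDerivAt (fderiv ℝ (uncurry H)) (fderiv ℝ (fderiv ℝ (uncurry H)) z) z :=
  ((hH.fderiv_right le_rfl).differentiable one_ne_zero z).hasFDerivAt

theorem continuous_uncurry_D2 (hH : ContDiff ℝ 1 (uncurry H)) : Continuous (uncurry (D2 H)) := by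
  have h : uncurry (D2 H) = fun z => fderiv ℝ (uncurry H) z (0, 1) :=
    funext fun z => D2_eq_fderiv (hH.differentiable one_ne_zero) z.1 z.2
  exact h ▸ (hH.continuous_fderiv one_ne_zero).clm_apply continuous_const

theorem D2_add_one_add_one (hper : ∀ x x', H (x + 1) (x' + 1) = H x x') (x x' : ℝ) :
    D2 H (x + 1) (x' + 1) = D2 H x x' := by
  have h : (fun t => H (x + 1) (t + 1)) = H x := funext (hper x)
  rw [D2, ← deriv_comp_add_const, h, D2]

theorem hasDerivAt_fderiv_left (hH : ContDiff ℝ 2 (uncurry H)) (x x' : ℝ) (v : ℝ × ℝ) :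
    HasDerivAt (fun t => fderiv ℝ (uncurry H) (t, x') v)
      (fderiv ℝ (fderiv ℝ (uncurry H)) (x, x') (1, 0) v) x :=
  ((hasFDerivAt_fderiv hH (x, x')).hasDerivAt_left.clm_apply (hasDerivAt_const x v)).congr_deriv
    (by simp)

theorem hasDerivAt_fderiv_right (hH : ContDiff ℝ 2 (uncurry H)) (x x' : ℝ) (v : ℝ × ℝ) :
    HasDerivAt (fun t => fderiv ℝ (uncurry H) (x, t) v)
      (fderiv ℝ (fderiv ℝ (uncurry H)) (x, x') (0, 1) v) x' :=
  ((hasFDerivAt_fderiv hH (x, x')).hasDerivAt_right.clm_apply (hasDerivAt_const x' v)).congr_deriv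
    (by simp)

theorem hasDerivAt_D1_left (hH : ContDiff ℝ 2 (uncurry H)) (x x' : ℝ) :
    HasDerivAt (D1 H · x') (D11 H x x') x := by
  rw [D11]
  simp only [D1_eq_fderiv (hH.differentiable two_ne_zero)]
  exact (hasDerivAt_fderiv_left hH x x' (1, 0)).differentiableAt.hasDerivAt

theorem hasDerivAt_D2_left (hH : ContDiff ℝ 2 (uncurry H)) (x x' : ℝ) :
    HasDerivAt (D2 H · x') (D21 H x x') x := by
  rw [D21]
  simp only [D2_eq_fderiv (hH.differentiable two_ne_zero)]
  exact (hasDerivAt_fderiv_left hH x x' (0, 1)).differentiableAt.hasDerivAt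

theorem D21_eq_D12 (hH : ContDiff ℝ 2 (uncurry H)) (x x' : ℝ) : D21 H x x' = D12 H x x' := by
  simp only [D21, D12, D1_eq_fderiv (hH.differentiable two_ne_zero),
    D2_eq_fderiv (hH.differentiable two_ne_zero), (hasDerivAt_fderiv_left hH x x' (0, 1)).deriv,
    (hasDerivAt_fderiv_right hH x x' (1, 0)).deriv]
  exact second_derivative_symmetric (fun z => (hH.differentiable two_ne_zero z).hasFDerivAt)
    (hasFDerivAt_fderiv hH (x, x')) _ _

end PartialDerivatives

theorem Function.Periodic.exists_abs_le {f : ℝ → ℝ} (hp : Periodic f 1) (hf : Continuous f) :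
    ∃ C, ∀ t, |f t| ≤ C := by
  obtain ⟨C, hC⟩ := (hp.isBounded_of_continuous one_ne_zero hf).exists_norm_le
  exact ⟨C, fun t => hC _ ⟨t, rfl⟩⟩

theorem Continuous.nonneg_of_tendsto_atTop {φ : ℝ → ℝ} {z : ℝ} (hφ : Continuous φ)
    (htop : Tendsto φ atTop atTop) (hzero : ∀ b, φ b = 0 → b ≤ z) {b : ℝ} (hb : z ≤ b) :
    0 ≤ φ b := by
  by_contra! hneg
  obtain ⟨B, hB, hbB⟩ := ((htop.eventually_ge_atTop 0).and (eventually_ge_atTop b)).exists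
  obtain ⟨a, ⟨hba, -⟩, ha⟩ := intermediate_value_Icc hbB hφ.continuousOn ⟨hneg.le, hB⟩
  have : a = b := le_antisymm ((hzero a ha).trans hb) hba
  exact hneg.ne (this ▸ ha)

theorem Continuous.nonpos_of_tendsto_atBot {φ : ℝ → ℝ} {z : ℝ} (hφ : Continuous φ)
    (hbot : Tendsto φ atBot atBot) (hzero : ∀ b, φ b = 0 → z ≤ b) {b : ℝ} (hb : b ≤ z) :
    φ b ≤ 0 := by
  have h := (continuous_neg.comp (hφ.comp continuous_neg)).nonneg_of_tendsto_atTop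
    (tendsto_neg_atBot_atTop.comp (hbot.comp tendsto_neg_atTop_atBot))
    (fun a ha => le_neg_of_le_neg (hzero (-a) (neg_eq_zero.1 ha))) (neg_le_neg hb)
  simpa using h

theorem isMinOn_of_hasDerivAt_nonpos_nonneg {g φ : ℝ → ℝ} {z : ℝ}
    (hg : ∀ t, HasDerivAt g (φ t) t) (hneg : ∀ t ≤ z, φ t ≤ 0) (hpos : ∀ t, z ≤ t → 0 ≤ φ t) :
    IsMinOn g Set.univ z := by
  have hcont : Continuous g := continuous_iff_continuousAt.2 fun t => (hg t).continuousAt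
  intro b _
  rcases le_total z b with hzb | hbz
  · refine monotoneOn_of_hasDerivWithinAt_nonneg (convex_Ici z) hcont.continuousOn
      (fun t _ => (hg t).hasDerivWithinAt) (fun t ht => hpos t ?_) Set.self_mem_Ici hzb hzb
    exact (interior_subset ht : t ∈ Set.Ici z)
  · refine antitoneOn_of_hasDerivWithinAt_nonpos (convex_Iic z) hcont.continuousOn
      (fun t _ => (hg t).hasDerivWithinAt) (fun t ht => hneg t ?_) hbz Set.self_mem_Iic hbz
    exact (interior_subset ht : t ∈ Set.Iic z)

theorem hasDerivAt_zero_of_isMinOn {β : Type*} {g g' : ℝ → β → ℝ} {G : ℝ → β} {s : ℝ}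
    (hmin : ∀ t, IsMinOn (g t) Set.univ (G t)) (hg : ∀ t b, HasDerivAt (g · b) (g' t b) t)
    (hsmall : Tendsto (fun p : ℝ × ℝ => g' p.1 (G p.2)) (𝓝 (s, s)) (𝓝 0)) :
    HasDerivAt (fun t => g t (G t)) 0 s := by
  rw [hasDerivAt_iff_isLittleO, Asymptotics.isLittleO_iff]
  intro ε hε
  obtain ⟨δ, hδ, hball⟩ :=
    Metric.eventually_nhds_iff.1 (hsmall.eventually (Metric.closedBall_mem_nhds 0 hε))
  have hvar : ∀ s', |s' - s| < δ → ∀ w, |w - s| < δ →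
      |g s' (G w) - g s (G w)| ≤ ε * |s' - s| := by
    intro s' hs' w hw
    refine Convex.norm_image_sub_le_of_norm_hasDerivWithin_le
      (fun t _ => (hg t (G w)).hasDerivWithinAt) (fun t ht => ?_) (convex_uIcc s s')
      Set.left_mem_uIcc Set.right_mem_uIcc
    have hts : |t - s| < δ := (Set.abs_sub_left_of_mem_uIcc ht).trans_lt hs'
    simpa using hball (y := (t, w)) (by simpa [Prod.dist_eq, Real.dist_eq] using ⟨hts, hw⟩)
  filter_upwards [Metric.ball_mem_nhds s hδ] with s' hs'
  rw [Metric.mem_ball, Real.dist_eq] at hs'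
  have h₁ := (abs_le.1 (hvar s' hs' s (by simpa using hδ))).2
  have h₂ := (abs_le.1 (hvar s' hs' s' hs')).1
  have hle₁ : g s' (G s') ≤ g s' (G s) := hmin s' (Set.mem_univ _)
  have hle₂ : g s (G s) ≤ g s (G s') := hmin s (Set.mem_univ _)
  simp only [smul_zero, sub_zero, Real.norm_eq_abs]
  exact abs_sub_le_iff.2 ⟨by linarith, by linarith⟩

section InvariantGraph

variable {H : ℝ → ℝ → ℝ} {F : ℝ × ℝ → ℝ × ℝ} {v U : ℝ → ℝ} {ρ : ℝ}

noncomputable def graphMap (F : ℝ × ℝ → ℝ × ℝ) (v : ℝ → ℝ) (a : ℝ) : ℝ := (F (a, v a)).1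

def tiltedH (H : ℝ → ℝ → ℝ) (U : ℝ → ℝ) (a b : ℝ) : ℝ := H a b + U a - U b

theorem apply_mk_graph (hinv : Set.MapsTo F {z | z.2 = v z.1} {z | z.2 = v z.1}) (a : ℝ) :
    F (a, v a) = (graphMap F v a, v (graphMap F v a)) :=
  Prod.ext rfl (hinv rfl)

theorem iterate_apply_mk_graph (hinv : Set.MapsTo F {z | z.2 = v z.1} {z | z.2 = v z.1})
    (k : ℕ) (a : ℝ) : F^[k] (a, v a) = ((graphMap F v)^[k] a, v ((graphMap F v)^[k] a)) := by
  induction k with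
  | zero => rfl
  | succ k ih => rw [iterate_succ_apply', ih, apply_mk_graph hinv, iterate_succ_apply']

theorem graph_eq_D1_D2
    (hFdef : ∀ x r x' r', F (x, r) = (x', r') ↔ (r = -D1 H x x' ∧ r' = D2 H x x'))
    (hinv : Set.MapsTo F {z | z.2 = v z.1} {z | z.2 = v z.1}) (a : ℝ) :
    v a = -D1 H a (graphMap F v a) ∧ v (graphMap F v a) = D2 H a (graphMap F v a) :=
  (hFdef _ _ _ _).1 (apply_mk_graph hinv a)

theorem eq_graphMap_of_D2_eq
    (hFdef : ∀ x r x' r', F (x, r) = (x', r') ↔ (r = -D1 H x x' ∧ r' = D2 H x x'))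
    (hFinj : Injective F) (hinv : Set.BijOn F {z | z.2 = v z.1} {z | z.2 = v z.1}) {a b : ℝ}
    (h : D2 H a b = v b) : b = graphMap F v a := by
  have hF : F (a, -D1 H a b) = (b, v b) := (hFdef _ _ _ _).2 ⟨rfl, h.symm⟩
  have hmem : (a, -D1 H a b) ∈ {z : ℝ × ℝ | z.2 = v z.1} := by
    rw [← Set.preimage_image_eq {z : ℝ × ℝ | z.2 = v z.1} hFinj, hinv.image_eq,
      Set.mem_preimage, hF]
    rfl
  have hF' : F (a, v a) = (b, v b) := hmem ▸ hF
  exact (congrArg Prod.fst hF').symm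

theorem D2_sub_D2_le (hH : ContDiff ℝ 2 (uncurry H)) (htwist : ∀ x x', D12 H x x' ≤ -ρ)
    (b : ℝ) {a a' : ℝ} (h : a ≤ a') : D2 H a' b - D2 H a b ≤ -ρ * (a' - a) :=
  image_sub_le_mul_sub_of_deriv_le (fun t => (hasDerivAt_D2_left hH t b).differentiableAt)
    (fun t => by rw [(hasDerivAt_D2_left hH t b).deriv, D21_eq_D12 hH]; exact htwist t b) h

theorem exists_abs_D2_sub_le (hH : ContDiff ℝ 2 (uncurry H))
    (hper : ∀ x x', H (x + 1) (x' + 1) = H x x') (hv : Continuous v) (hvper : Periodic v 1) :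
    ∃ K, ∀ b, |D2 H b b - v b| ≤ K :=
  Periodic.exists_abs_le (fun b => by simp only [D2_add_one_add_one hper, hvper b])
    (((continuous_uncurry_D2 (hH.of_le one_le_two)).comp
      (continuous_id.prodMk continuous_id)).sub hv)

theorem tendsto_D2_sub_atTop (hH : ContDiff ℝ 2 (uncurry H)) (hρ : 0 < ρ)
    (htwist : ∀ x x', D12 H x x' ≤ -ρ) {K : ℝ} (hK : ∀ b, |D2 H b b - v b| ≤ K) (a : ℝ) :
    Tendsto (fun b => D2 H a b - v b) atTop atTop := by
  -- `D2 H a b - v b = (D2 H a b - D2 H b b) + (D2 H b b - v b)`: twist term plus bounded term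
  refine tendsto_atTop_mono' _ ?_ (tendsto_atTop_add_const_right _ (-K)
    ((tendsto_atTop_add_const_right _ (-a) tendsto_id).const_mul_atTop hρ))
  filter_upwards [eventually_ge_atTop a] with b hab
  have := D2_sub_D2_le hH htwist b hab
  simp only [id]
  linarith [(abs_le.1 (hK b)).1]

theorem tendsto_D2_sub_atBot (hH : ContDiff ℝ 2 (uncurry H)) (hρ : 0 < ρ)
    (htwist : ∀ x x', D12 H x x' ≤ -ρ) {K : ℝ} (hK : ∀ b, |D2 H b b - v b| ≤ K) (a : ℝ) :
    Tendsto (fun b => D2 H a b - v b) atBot atBot := by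
  refine tendsto_atBot_mono' _ ?_ (tendsto_atBot_add_const_right _ K
    ((tendsto_atBot_add_const_right _ (-a) tendsto_id).const_mul_atBot hρ))
  filter_upwards [eventually_le_atBot a] with b hba
  have := D2_sub_D2_le hH htwist b hba
  simp only [id]
  linarith [(abs_le.1 (hK b)).2]

theorem abs_D1_sub_D1_le (hH : ContDiff ℝ 2 (uncurry H)) {M : ℝ} (hM : ∀ x x', |D11 H x x'| ≤ M)
    (t w b : ℝ) : |D1 H t b - D1 H w b| ≤ M * |t - w| :=
  convex_univ.norm_image_sub_le_of_norm_hasDerivWithin_le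
    (fun r _ => (hasDerivAt_D1_left hH r b).hasDerivWithinAt) (fun r _ => hM r b) trivial trivial

theorem hasDerivAt_tiltedH_left (hH : Differentiable ℝ (uncurry H))
    (hU : ∀ t, HasDerivAt U (v t) t) (a b : ℝ) :
    HasDerivAt (tiltedH H U · b) (D1 H a b + v a) a :=
  ((hasDerivAt_left hH a b).add (hU a)).sub_const (U b)

theorem hasDerivAt_tiltedH_right (hH : Differentiable ℝ (uncurry H))
    (hU : ∀ t, HasDerivAt U (v t) t) (a b : ℝ) :
    HasDerivAt (tiltedH H U a) (D2 H a b - v b) b :=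
  ((hasDerivAt_right hH a b).add_const (U a)).sub (hU b)

theorem sum_tiltedH (H : ℝ → ℝ → ℝ) (U : ℝ → ℝ) (z : ℕ → ℝ) (q : ℕ) :
    ∑ k ∈ Finset.range q, tiltedH H U (z k) (z (k + 1)) =
      ∑ k ∈ Finset.range q, H (z k) (z (k + 1)) + (U (z 0) - U (z q)) := by
  simp only [tiltedH, add_sub_assoc, Finset.sum_add_distrib, Finset.sum_range_sub']

theorem isMinOn_tiltedH_graphMap (hH : ContDiff ℝ 2 (uncurry H))
    (hper : ∀ x x', H (x + 1) (x' + 1) = H x x') (hρ : 0 < ρ)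
    (htwist : ∀ x x', D12 H x x' ≤ -ρ) (hFinj : Injective F)
    (hFdef : ∀ x r x' r', F (x, r) = (x', r') ↔ (r = -D1 H x x' ∧ r' = D2 H x x'))
    (hinv : Set.BijOn F {z | z.2 = v z.1} {z | z.2 = v z.1}) (hv : Continuous v)
    (hvper : Periodic v 1) (hU : ∀ t, HasDerivAt U (v t) t) (a : ℝ) :
    IsMinOn (tiltedH H U a) Set.univ (graphMap F v a) := by
  obtain ⟨K, hK⟩ := exists_abs_D2_sub_le hH hper hv hvper
  have hφ : Continuous fun b => D2 H a b - v b :=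
    ((continuous_uncurry_D2 (hH.of_le one_le_two)).comp
      (continuous_const.prodMk continuous_id)).sub hv
  have hzero (b : ℝ) (hb : D2 H a b - v b = 0) : b = graphMap F v a :=
    eq_graphMap_of_D2_eq hFdef hFinj hinv (sub_eq_zero.1 hb)
  exact isMinOn_of_hasDerivAt_nonpos_nonneg
    (hasDerivAt_tiltedH_right (hH.differentiable two_ne_zero) hU a)
    (fun _ => hφ.nonpos_of_tendsto_atBot (tendsto_D2_sub_atBot hH hρ htwist hK a)
      fun b hb => (hzero b hb).ge)
    (fun _ => hφ.nonneg_of_tendsto_atTop (tendsto_D2_sub_atTop hH hρ htwist hK a)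
      fun b hb => (hzero b hb).le)

theorem tendsto_D1_graphMap_add (hH : ContDiff ℝ 2 (uncurry H)) {M : ℝ}
    (hM : ∀ x x', |D11 H x x'| ≤ M)
    (hFdef : ∀ x r x' r', F (x, r) = (x', r') ↔ (r = -D1 H x x' ∧ r' = D2 H x x'))
    (hinv : Set.MapsTo F {z | z.2 = v z.1} {z | z.2 = v z.1}) (hv : Continuous v) (s : ℝ) :
    Tendsto (fun p : ℝ × ℝ => D1 H p.1 (graphMap F v p.2) + v p.1) (𝓝 (s, s)) (𝓝 0) := by
  have hbound : Continuous fun p : ℝ × ℝ => M * |p.1 - p.2| + |v p.1 - v p.2| := by fun_prop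
  refine squeeze_zero_norm (fun p => ?_) (by simpa using hbound.tendsto (s, s))
  obtain ⟨t, w⟩ := p
  have hvw := (graph_eq_D1_D2 hFdef hinv w).1
  calc ‖D1 H t (graphMap F v w) + v t‖
      = |(D1 H t (graphMap F v w) - D1 H w (graphMap F v w)) + (v t - v w)| := by
        rw [Real.norm_eq_abs, hvw]
        ring_nf
    _ ≤ M * |t - w| + |v t - v w| :=
        (abs_add_le _ _).trans (add_le_add_left (abs_D1_sub_D1_le hH hM _ _ _) _)

theorem tiltedH_graphMap_eq (hH : ContDiff ℝ 2 (uncurry H))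
    (hper : ∀ x x', H (x + 1) (x' + 1) = H x x') (hρ : 0 < ρ)
    (htwist : ∀ x x', D12 H x x' ≤ -ρ) {M : ℝ} (hM : ∀ x x', |D11 H x x'| ≤ M)
    (hFinj : Injective F)
    (hFdef : ∀ x r x' r', F (x, r) = (x', r') ↔ (r = -D1 H x x' ∧ r' = D2 H x x'))
    (hinv : Set.BijOn F {z | z.2 = v z.1} {z | z.2 = v z.1}) (hv : Continuous v)
    (hvper : Periodic v 1) (hU : ∀ t, HasDerivAt U (v t) t) (a a' : ℝ) :
    tiltedH H U a (graphMap F v a) = tiltedH H U a' (graphMap F v a') := by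
  have hderiv (s : ℝ) : HasDerivAt (fun t => tiltedH H U t (graphMap F v t)) 0 s :=
    hasDerivAt_zero_of_isMinOn
      (isMinOn_tiltedH_graphMap hH hper hρ htwist hFinj hFdef hinv hv hvper hU)
      (hasDerivAt_tiltedH_left (hH.differentiable two_ne_zero) hU)
      (tendsto_D1_graphMap_add hH hM hFdef hinv.mapsTo hv s)
  exact is_const_of_deriv_eq_zero (fun t => (hderiv t).differentiableAt)
    (fun t => (hderiv t).deriv) a a'

theorem sum_H_iterate_graphMap_le (hH : ContDiff ℝ 2 (uncurry H))
    (hper : ∀ x x', H (x + 1) (x' + 1) = H x x') (hρ : 0 < ρ)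
    (htwist : ∀ x x', D12 H x x' ≤ -ρ) {M : ℝ} (hM : ∀ x x', |D11 H x x'| ≤ M)
    (hFinj : Injective F)
    (hFdef : ∀ x r x' r', F (x, r) = (x', r') ↔ (r = -D1 H x x' ∧ r' = D2 H x x'))
    (hinv : Set.BijOn F {z | z.2 = v z.1} {z | z.2 = v z.1}) (hv : Continuous v)
    (hvper : Periodic v 1) (hU : ∀ t, HasDerivAt U (v t) t) (q : ℕ) (a : ℝ) (y : ℕ → ℝ)
    (hy₀ : y 0 = a) (hy : y q = (graphMap F v)^[q] a) :
    ∑ k ∈ Finset.range q, H ((graphMap F v)^[k] a) ((graphMap F v)^[k + 1] a) ≤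
      ∑ k ∈ Finset.range q, H (y k) (y (k + 1)) := by
  set G := graphMap F v
  have hle : ∑ k ∈ Finset.range q, tiltedH H U (G^[k] a) (G^[k + 1] a) ≤
      ∑ k ∈ Finset.range q, tiltedH H U (y k) (y (k + 1)) := by
    refine Finset.sum_le_sum fun k _ => ?_
    rw [iterate_succ_apply',
      tiltedH_graphMap_eq hH hper hρ htwist hM hFinj hFdef hinv hv hvper hU _ (y k)]
    exact isMinOn_tiltedH_graphMap hH hper hρ htwist hFinj hFdef hinv hv hvper hU (y k)
      (Set.mem_univ _)
  rw [sum_tiltedH, sum_tiltedH, hy₀, hy] at hle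
  simpa using hle

end InvariantGraph

theorem stmt14_general (H : ℝ → ℝ → ℝ) (ρ M : ℝ) (F : ℝ × ℝ → ℝ × ℝ)
    (hH : ContDiff ℝ 2 (Function.uncurry H))
    (hper : ∀ x x', H (x + 1) (x' + 1) = H x x')
    (hρ : 0 < ρ) (htwist : ∀ x x', D12 H x x' ≤ -ρ)
    (hbound : ∀ x x', |D11 H x x'| ≤ M ∧ |D12 H x x'| ≤ M ∧ |D21 H x x'| ≤ M ∧
      |D22 H x x'| ≤ M)
    (hFbij : Function.Bijective F)
    (hFdef : ∀ x r x' r', F (x, r) = (x', r') ↔ (r = -D1 H x x' ∧ r' = D2 H x x'))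
    (u : ℝ → ℝ) (hu : ContDiff ℝ 1 u) (huper : ∀ x, u (x + 1) = u x) (c : ℝ)
    (hinv : Set.BijOn F {p : ℝ × ℝ | p.2 = c + deriv u p.1}
      {p : ℝ × ℝ | p.2 = c + deriv u p.1})
    (p : ℤ) (q : ℕ)
    (hperiodic : ∀ x : ℝ, F^[q] (x, c + deriv u x) = (x + p, c + deriv u x))
    (x₀ : ℝ) (x : ℕ → ℝ) (hx : ∀ k, x k = (F^[k] (x₀, c + deriv u x₀)).1) :
    ∀ y : ℕ → ℝ, y 0 = x₀ → y q = x₀ + p →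
      ∑ k ∈ Finset.range q, H (x k) (x (k + 1)) ≤
        ∑ k ∈ Finset.range q, H (y k) (y (k + 1)) := by
  intro y hy₀ hyq
  set v : ℝ → ℝ := fun t => c + deriv u t
  have hv : Continuous v := continuous_const.add (hu.continuous_deriv le_rfl)
  have hvper : Periodic v 1 := fun t => by
    have h : (fun s => u (s + 1)) = u := funext huper
    simp only [v, ← deriv_comp_add_const, h]
  have hU (t : ℝ) : HasDerivAt (fun s => u s + c * s) (v t) t :=
    ((hu.differentiable one_ne_zero t).hasDerivAt.add ((hasDerivAt_id t).const_mul c)).congr_deriv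
      (by simp only [v, mul_one, add_comm])
  have hinv' : Set.BijOn F {z | z.2 = v z.1} {z | z.2 = v z.1} := hinv
  have horbit (k : ℕ) : x k = (graphMap F v)^[k] x₀ := by
    rw [hx]
    exact congrArg Prod.fst (iterate_apply_mk_graph hinv'.mapsTo k x₀)
  have hend : (graphMap F v)^[q] x₀ = x₀ + p := by
    rw [← horbit, hx, hperiodic]
  simp only [horbit]
  exact sum_H_iterate_graphMap_le hH hper hρ htwist (fun x x' => (hbound x x').1) hFbij.injective
    hFdef hinv' hv hvper hU q x₀ y hy₀ (hyq.trans hend.symm)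

/-- Orbits on a `(p, q)`-periodic invariant graph minimize the action among all paths with
the same endpoints: if `F^q(x, c + u'(x)) = (x + p, c + u'(x))` for all `x`, and
`x_k = π₁F^k(x₀, c + u'(x₀))`, then for every sequence `y₀, …, y_q` with `y₀ = x₀` and
`y_q = x₀ + p`, the action `Σ_{k<q} H(x_k, x_{k+1})` is at most `Σ_{k<q} H(y_k, y_{k+1})`. -/
theorem stmt14 (H : ℝ → ℝ → ℝ) (ρ M : ℝ) (F : ℝ × ℝ → ℝ × ℝ)
    (hH : ContDiff ℝ 2 (Function.uncurry H))
    (hper : ∀ x x', H (x + 1) (x' + 1) = H x x')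
    (hρ : 0 < ρ) (htwist : ∀ x x', D12 H x x' ≤ -ρ)
    (hM : 0 < M)
    (hbound : ∀ x x', |D11 H x x'| ≤ M ∧ |D12 H x x'| ≤ M ∧ |D21 H x x'| ≤ M ∧
      |D22 H x x'| ≤ M)
    (hFbij : Function.Bijective F)
    (hFdef : ∀ x r x' r', F (x, r) = (x', r') ↔ (r = -D1 H x x' ∧ r' = D2 H x x'))
    (u : ℝ → ℝ) (hu : ContDiff ℝ 1 u) (huper : ∀ x, u (x + 1) = u x) (c : ℝ)
    (hinv : Set.BijOn F {p : ℝ × ℝ | p.2 = c + deriv u p.1}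
      {p : ℝ × ℝ | p.2 = c + deriv u p.1})
    (p : ℤ) (q : ℕ) (hq : 1 ≤ q)
    (hperiodic : ∀ x : ℝ, F^[q] (x, c + deriv u x) = (x + p, c + deriv u x))
    (x₀ : ℝ) (x : ℕ → ℝ) (hx : ∀ k, x k = (F^[k] (x₀, c + deriv u x₀)).1) :
    ∀ y : ℕ → ℝ, y 0 = x₀ → y q = x₀ + p →
      ∑ k ∈ Finset.range q, H (x k) (x (k + 1)) ≤
        ∑ k ∈ Finset.range q, H (y k) (y (k + 1)) :=
  stmt14_general H ρ M F hH hper hρ htwist hbound hFbij hFdef u hu huper c hinv p q hperiodic x₀ x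
    hx
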